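/- arXiv:1810.10114 — 2 statements merged into one kernel-verified Lean document; each statement's English description precedes it below -/
import Mathlib

section
/- Let A_1, A_2, … be i.i.d. {0,1}-valued random variables with P(A_ℓ = 1) = μ(1), and set S_L = A_1 + … + A_L. Let ρ > 0 and let n ↦ L_n be a ρ-admissible scaling. Then almost surely, as n → ∞, the sequence (n−1) Γ(1)^{S_{L_n}} Γ(0)^{L_n − S_{L_n}} converges to 0 if 1 + ρ·ln(Γ(1)^{μ(1)} Γ(0)^{μ(0)}) < 0, and converges to ∞ if 1 + ρ·ln(Γ(1)^{μ(1)} Γ(0)^{μ(0)}) > 0. -/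
open MeasureTheory ProbabilityTheory Filter Real
open scoped ENNReal NNReal

noncomputable section

/-- A compound-binomial degree pair `(D, S)` with parameters `(n, L)`:
`S` is Binomial(L, μ1) and, conditionally on `S = ℓ`, `D` is
Binomial(n-1, Γ1^ℓ Γ0^(L-ℓ)); equivalently the joint pmf is as below. -/
def IsCompoundBinomialPair {Ω : Type*} [MeasurableSpace Ω] (P : Measure Ω)
    (μ1 μ0 Γ1 Γ0 : ℝ) (n L : ℕ) (D S : Ω → ℕ) : Prop :=
  Measurable D ∧ Measurable S ∧
    ∀ d ≤ n - 1, ∀ ℓ ≤ L,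
      P {ω | D ω = d ∧ S ω = ℓ} =
        ENNReal.ofReal ((L.choose ℓ : ℝ) * μ1 ^ ℓ * μ0 ^ (L - ℓ) *
          ((n - 1).choose d : ℝ) * (Γ1 ^ ℓ * Γ0 ^ (L - ℓ)) ^ d *
          (1 - Γ1 ^ ℓ * Γ0 ^ (L - ℓ)) ^ (n - 1 - d))

/-- A scaling `n ↦ L n` is `ρ`-admissible if `L n ~ ρ ln n` as `n → ∞`. -/
def IsAdmissible (ρ : ℝ) (L : ℕ → ℕ) : Prop :=
  (∀ n, 0 < L n) ∧
    Tendsto (fun n => (L n : ℝ) / (ρ * Real.log n)) atTop (nhds 1)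

/-- `Ψ(x) = (x+1) ln(x+1) - x`. -/
def Psi (x : ℝ) : ℝ := (x + 1) * Real.log (x + 1) - x

/-- The standard Gaussian distribution function. -/
def Phi (z : ℝ) : ℝ := ∫ t in Set.Iic z, Real.exp (-t ^ 2 / 2) / Real.sqrt (2 * Real.pi)

/-!
By the strong law of large numbers, `S_L / L → μ(1)` almost surely, and `L_n → ∞`, so
`S_{L_n} / L_n → μ(1)`. Since `L_n ~ ρ ln n` and `ln (n - 1) ~ ln n`, the logarithm of
`(n - 1) Γ(1)^{S_{L_n}} Γ(0)^{L_n - S_{L_n}}` is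
`(1 + ρ (μ(1) ln Γ(1) + μ(0) ln Γ(0)) + o(1)) ln n`, which tends to `-∞` or `+∞` according
to the sign of the constant.
-/

open Finset Topology

namespace Real

variable {α : Type*} {l : Filter α} {f g : α → ℝ} {c : ℝ}

theorem tendsto_nhds_zero_of_tendsto_log_div_neg (hg : Tendsto g l atTop)
    (h : Tendsto (fun x => log (f x) / g x) l (𝓝 c)) (hc : c < 0) (hf : ∀ᶠ x in l, 0 < f x) :
    Tendsto f l (𝓝 0) := by
  have hlog : Tendsto (fun x => log (f x)) l atBot :=
    (h.neg_mul_atTop hc hg).congr' <| by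
      filter_upwards [hg.eventually_gt_atTop 0] with x hx using div_mul_cancel₀ _ hx.ne'
  exact (tendsto_exp_atBot.comp hlog).congr' <| by
    filter_upwards [hf] with x hx using exp_log hx

theorem tendsto_atTop_of_tendsto_log_div_pos (hg : Tendsto g l atTop)
    (h : Tendsto (fun x => log (f x) / g x) l (𝓝 c)) (hc : 0 < c) (hf : ∀ᶠ x in l, 0 < f x) :
    Tendsto f l atTop := by
  have hlog : Tendsto (fun x => log (f x)) l atTop :=
    (h.pos_mul_atTop hc hg).congr' <| by
      filter_upwards [hg.eventually_gt_atTop 0] with x hx using div_mul_cancel₀ _ hx.ne'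
  exact (tendsto_exp_atTop.comp hlog).congr' <| by
    filter_upwards [hf] with x hx using exp_log hx

theorem tendsto_log_natCast_atTop : Tendsto (fun n : ℕ => log n) atTop atTop :=
  tendsto_log_atTop.comp tendsto_natCast_atTop_atTop

theorem tendsto_log_natCast_sub_one_div_log :
    Tendsto (fun n : ℕ => log ((n : ℝ) - 1) / log n) atTop (𝓝 1) := by
  have hratio : Tendsto (fun n : ℕ => 1 - 1 / (n : ℝ)) atTop (𝓝 1) := by
    simpa using tendsto_const_nhds.sub (tendsto_one_div_atTop_nhds_zero_nat (𝕜 := ℝ))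
  have hlog : Tendsto (fun n : ℕ => log (1 - 1 / (n : ℝ)) / log n) atTop (𝓝 0) := by
    have := (continuousAt_log one_ne_zero).tendsto.comp hratio
    rw [log_one] at this
    exact this.div_atTop tendsto_log_natCast_atTop
  have hsum : Tendsto (fun n : ℕ => 1 + log (1 - 1 / (n : ℝ)) / log n) atTop (𝓝 1) := by
    simpa using hlog.const_add 1
  refine hsum.congr' ?_
  filter_upwards [eventually_ge_atTop 2] with n hn
  have hn : (2 : ℝ) ≤ n := by exact_mod_cast hn
  have hlogn : 0 < log n := log_pos (by linarith)
  rw [show (n : ℝ) - 1 = n * (1 - 1 / n) by field_simp,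
    log_mul (by positivity) (by rw [sub_ne_zero]; exact ((div_lt_one (by linarith)).2
      (by linarith)).ne'), add_div, div_self hlogn.ne']

end Real

namespace IsAdmissible

variable {ρ : ℝ} {L : ℕ → ℕ}

theorem tendsto_div_log (hL : IsAdmissible ρ L) (hρ : ρ ≠ 0) :
    Tendsto (fun n => (L n : ℝ) / log n) atTop (𝓝 ρ) := by
  refine (by simpa using hL.2.mul_const ρ : Tendsto _ atTop (𝓝 ρ)).congr' ?_
  filter_upwards [Real.tendsto_log_natCast_atTop.eventually_gt_atTop 0] with n hn
  field_simp

theorem tendsto_atTop (hL : IsAdmissible ρ L) (hρ : 0 < ρ) : Tendsto L atTop atTop := by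
  have h := (hL.tendsto_div_log hρ.ne').pos_mul_atTop hρ Real.tendsto_log_natCast_atTop
  refine tendsto_natCast_atTop_iff.mp (h.congr' ?_)
  filter_upwards [Real.tendsto_log_natCast_atTop.eventually_gt_atTop 0] with n hn
  exact div_mul_cancel₀ _ hn.ne'

end IsAdmissible

theorem tendsto_log_natCast_sub_one_mul_pow_mul_pow_div_log {Γ0 Γ1 p ρ : ℝ}
    (hΓ0 : 0 < Γ0) (hΓ1 : 0 < Γ1) {L s : ℕ → ℕ} (hsL : ∀ n, s n ≤ L n) (hL : ∀ n, 0 < L n)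
    (hLlog : Tendsto (fun n => (L n : ℝ) / log n) atTop (𝓝 ρ))
    (hs : Tendsto (fun n => (s n : ℝ) / L n) atTop (𝓝 p)) :
    Tendsto (fun n : ℕ => log (((n : ℝ) - 1) * Γ1 ^ s n * Γ0 ^ (L n - s n)) / log n) atTop
      (𝓝 (1 + ρ * (p * log Γ1 + (1 - p) * log Γ0))) := by
  have hmix : Tendsto (fun n => (L n : ℝ) / log n *
      ((s n : ℝ) / L n * log Γ1 + (1 - (s n : ℝ) / L n) * log Γ0)) atTop
      (𝓝 (ρ * (p * log Γ1 + (1 - p) * log Γ0))) :=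
    hLlog.mul (((hs.mul_const _).add ((tendsto_const_nhds.sub hs).mul_const _)))
  refine (Real.tendsto_log_natCast_sub_one_div_log.add hmix).congr' ?_
  filter_upwards [eventually_ge_atTop 2] with n hn
  have hn : (0 : ℝ) < (n : ℝ) - 1 := by
    have : (2 : ℝ) ≤ n := by exact_mod_cast hn
    linarith
  have hLn : (L n : ℝ) ≠ 0 := by exact_mod_cast (hL n).ne'
  rw [log_mul (by positivity) (by positivity), log_mul hn.ne' (by positivity),
    log_pow, log_pow, Nat.cast_sub (hsL n)]
  field_simp
  ring

section ZeroOneValued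

variable {Ω : Type*} {X Y : Ω → ℕ}

theorem natCast_eq_indicator_of_le_one (hX : ∀ ω, X ω ≤ 1) :
    (fun ω => (X ω : ℝ)) = {ω | X ω = 1}.indicator 1 := by
  ext ω
  rcases Nat.le_one_iff_eq_zero_or_eq_one.mp (hX ω) with h | h <;> simp [h]

theorem preimage_singleton_of_le_one (hX : ∀ ω, X ω ≤ 1) (k : ℕ) :
    X ⁻¹' {k} = if k = 0 then {ω | X ω = 1}ᶜ else if k = 1 then {ω | X ω = 1} else ∅ := by
  ext ω
  have := hX ω
  split_ifs <;> simp only [Set.mem_preimage, Set.mem_singleton_iff, Set.mem_compl_iff,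
    Set.mem_ofPred_eq, Set.mem_empty_iff_false, iff_false] <;> omega

variable [MeasurableSpace Ω] {P : Measure Ω}

theorem identDistrib_of_le_one [IsFiniteMeasure P] (hX : Measurable X) (hY : Measurable Y)
    (hX1 : ∀ ω, X ω ≤ 1) (hY1 : ∀ ω, Y ω ≤ 1) (h : P {ω | X ω = 1} = P {ω | Y ω = 1}) :
    IdentDistrib X Y P P where
  aemeasurable_fst := hX.aemeasurable
  aemeasurable_snd := hY.aemeasurable
  map_eq := by
    refine Measure.ext_of_singleton fun k => ?_
    rw [Measure.map_apply hX (measurableSet_singleton k),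
      Measure.map_apply hY (measurableSet_singleton k),
      preimage_singleton_of_le_one hX1, preimage_singleton_of_le_one hY1]
    have hXm : MeasurableSet {ω | X ω = 1} := hX (measurableSet_singleton 1)
    have hYm : MeasurableSet {ω | Y ω = 1} := hY (measurableSet_singleton 1)
    split_ifs
    · rw [measure_compl hXm (measure_ne_top P _), measure_compl hYm (measure_ne_top P _), h]
    · exact h
    · rfl

theorem ae_tendsto_sum_range_div_of_le_one [IsFiniteMeasure P] {A : ℕ → Ω → ℕ}
    (hA : ∀ ℓ, Measurable (A ℓ)) (hA1 : ∀ ℓ ω, A ℓ ω ≤ 1)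
    (hlaw : ∀ ℓ, P {ω | A ℓ ω = 1} = P {ω | A 0 ω = 1}) (hindep : iIndepFun A P) :
    ∀ᵐ ω ∂P, Tendsto (fun k : ℕ => ((∑ ℓ ∈ range k, A ℓ ω : ℕ) : ℝ) / k) atTop
      (𝓝 (P.real {ω | A 0 ω = 1})) := by
  have hcast : Measurable (fun m : ℕ => (m : ℝ)) := measurable_from_top
  have hmeas : MeasurableSet {ω | A 0 ω = 1} := hA 0 (measurableSet_singleton 1)
  have hslln := strong_law_ae_real (fun ℓ ω => (A ℓ ω : ℝ))
    (by rw [natCast_eq_indicator_of_le_one (hA1 0)]; exact (integrable_const 1).indicator hmeas)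
    (fun i j hij => (hindep.indepFun hij).comp hcast hcast)
    (fun ℓ => (identDistrib_of_le_one (hA ℓ) (hA 0) (hA1 ℓ) (hA1 0) (hlaw ℓ)).comp hcast)
  rw [natCast_eq_indicator_of_le_one (hA1 0), integral_indicator_one hmeas] at hslln
  simpa only [Nat.cast_sum] using hslln

end ZeroOneValued

theorem stmt12_general {Ω : Type*} [MeasurableSpace Ω] (P : Measure Ω) [IsProbabilityMeasure P]
    (μ0 μ1 Γ0 Γ1 : ℝ) (hμ1 : μ1 ∈ Set.Ioo (0:ℝ) 1)
    (hμ : μ0 + μ1 = 1) (hΓ0 : Γ0 ∈ Set.Ioo (0:ℝ) 1) (hΓ1 : Γ1 ∈ Set.Ioo (0:ℝ) 1)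
    (A : ℕ → Ω → ℕ)
    (hAmeas : ∀ ℓ, Measurable (A ℓ))
    (hA01 : ∀ ℓ ω, A ℓ ω ≤ 1)
    (hA1 : ∀ ℓ, P {ω | A ℓ ω = 1} = ENNReal.ofReal μ1)
    (hindep : iIndepFun A P)
    (ρ : ℝ) (hρ : 0 < ρ) (L : ℕ → ℕ) (hL : IsAdmissible ρ L) :
    (1 + ρ * Real.log (Γ1 ^ μ1 * Γ0 ^ μ0) < 0 →
      ∀ᵐ ω ∂P, Tendsto (fun (n : ℕ) =>
          ((n : ℝ) - 1) * Γ1 ^ (∑ ℓ ∈ Finset.range (L n), A ℓ ω) *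
            Γ0 ^ (L n - ∑ ℓ ∈ Finset.range (L n), A ℓ ω))
        atTop (nhds 0)) ∧
    (0 < 1 + ρ * Real.log (Γ1 ^ μ1 * Γ0 ^ μ0) →
      ∀ᵐ ω ∂P, Tendsto (fun (n : ℕ) =>
          ((n : ℝ) - 1) * Γ1 ^ (∑ ℓ ∈ Finset.range (L n), A ℓ ω) *
            Γ0 ^ (L n - ∑ ℓ ∈ Finset.range (L n), A ℓ ω))
        atTop atTop) := by
  obtain ⟨hΓ0, -⟩ := hΓ0
  obtain ⟨hΓ1, -⟩ := hΓ1
  set f : ℕ → Ω → ℝ := fun n ω => ((n : ℝ) - 1) * Γ1 ^ (∑ ℓ ∈ Finset.range (L n), A ℓ ω) *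
    Γ0 ^ (L n - ∑ ℓ ∈ Finset.range (L n), A ℓ ω)
  have hlaw : ∀ ℓ, P {ω | A ℓ ω = 1} = P {ω | A 0 ω = 1} := fun ℓ => (hA1 ℓ).trans (hA1 0).symm
  have hmean : P.real {ω | A 0 ω = 1} = μ1 := by
    rw [measureReal_def, hA1 0, ENNReal.toReal_ofReal hμ1.1.le]
  have hexponent : log (Γ1 ^ μ1 * Γ0 ^ μ0) = μ1 * log Γ1 + (1 - μ1) * log Γ0 := by
    rw [log_mul (by positivity) (by positivity), log_rpow hΓ1, log_rpow hΓ0,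
      ← hμ, add_sub_cancel_right]
  have hlog : ∀ᵐ ω ∂P, Tendsto (fun n => log (f n ω) / log n) atTop
      (𝓝 (1 + ρ * log (Γ1 ^ μ1 * Γ0 ^ μ0))) := by
    filter_upwards [ae_tendsto_sum_range_div_of_le_one hAmeas hA01 hlaw hindep] with ω hω
    rw [hmean] at hω
    rw [hexponent]
    exact tendsto_log_natCast_sub_one_mul_pow_mul_pow_div_log hΓ0 hΓ1
      (fun n => (sum_le_card_nsmul _ _ 1 fun ℓ _ => hA01 ℓ ω).trans_eq (by simp)) hL.1
      (hL.tendsto_div_log hρ.ne') (hω.comp (hL.tendsto_atTop hρ))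
  have hpos : ∀ ω, ∀ᶠ n in atTop, 0 < f n ω := fun ω => by
    filter_upwards [eventually_gt_atTop 1] with n hn
    have : (1 : ℝ) < n := by exact_mod_cast hn
    simp only [f]
    positivity
  exact ⟨fun hc => hlog.mono fun ω hω => Real.tendsto_nhds_zero_of_tendsto_log_div_neg
      Real.tendsto_log_natCast_atTop hω hc (hpos ω),
    fun hc => hlog.mono fun ω hω => Real.tendsto_atTop_of_tendsto_log_div_pos
      Real.tendsto_log_natCast_atTop hω hc (hpos ω)⟩

/-- almost surely, `(n-1) Γ1^{S_{L_n}} Γ0^{L_n - S_{L_n}}` converges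
to `0` if `1 + ρ ln(Γ1^μ1 Γ0^μ0) < 0` and to `∞` if `1 + ρ ln(Γ1^μ1 Γ0^μ0) > 0`. -/
theorem stmt12 {Ω : Type*} [MeasurableSpace Ω] (P : Measure Ω) [IsProbabilityMeasure P]
    (μ0 μ1 Γ0 Γ1 : ℝ) (hμ0 : μ0 ∈ Set.Ioo (0:ℝ) 1) (hμ1 : μ1 ∈ Set.Ioo (0:ℝ) 1)
    (hμ : μ0 + μ1 = 1) (hΓ0 : Γ0 ∈ Set.Ioo (0:ℝ) 1) (hΓ1 : Γ1 ∈ Set.Ioo (0:ℝ) 1)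
    (A : ℕ → Ω → ℕ)
    (hAmeas : ∀ ℓ, Measurable (A ℓ))
    (hA01 : ∀ ℓ ω, A ℓ ω ≤ 1)
    (hA1 : ∀ ℓ, P {ω | A ℓ ω = 1} = ENNReal.ofReal μ1)
    (hindep : iIndepFun A P)
    (ρ : ℝ) (hρ : 0 < ρ) (L : ℕ → ℕ) (hL : IsAdmissible ρ L) :
    (1 + ρ * Real.log (Γ1 ^ μ1 * Γ0 ^ μ0) < 0 →
      ∀ᵐ ω ∂P, Tendsto (fun (n : ℕ) =>
          ((n : ℝ) - 1) * Γ1 ^ (∑ ℓ ∈ Finset.range (L n), A ℓ ω) *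
            Γ0 ^ (L n - ∑ ℓ ∈ Finset.range (L n), A ℓ ω))
        atTop (nhds 0)) ∧
    (0 < 1 + ρ * Real.log (Γ1 ^ μ1 * Γ0 ^ μ0) →
      ∀ᵐ ω ∂P, Tendsto (fun (n : ℕ) =>
          ((n : ℝ) - 1) * Γ1 ^ (∑ ℓ ∈ Finset.range (L n), A ℓ ω) *
            Γ0 ^ (L n - ∑ ℓ ∈ Finset.range (L n), A ℓ ω))
        atTop atTop) :=
  stmt12_general P μ0 μ1 Γ0 Γ1 hμ1 hμ hΓ0 hΓ1 A hAmeas hA01 hA1 hindep ρ hρ L hL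
end
end

section
/- Fix integers n ≥ 2 and L ≥ 1 and let (D, S) be a compound-binomial degree pair with parameters (n, L). Then for every η ∈ (0, μ(1)) and every δ > 0, P( | D / ((n−1) Γ(1)^{S} Γ(0)^{L−S}) − 1 | > δ ) ≤ 4 e^{−2 L η²} + 2 exp( −Ψ(δ) · (n−1) ( Γ(1)^{μ(1)+η} Γ(0)^{1−μ(1)+η} )^{L} ), where Ψ(x) = (x+1)ln(x+1) − x. -/
/-!
Given `S = ℓ`, `D` is binomial with `n - 1` trials and success probability
`p ℓ = Γ₁ ^ ℓ * Γ₀ ^ (L - ℓ)`. Outside an event of probability at most `2 e^{-2 L η²}`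
(Hoeffding for `S`), `|S - μ₁ L| ≤ η L`, and then `p S ≥ (Γ₁ ^ (μ₁ + η) * Γ₀ ^ (1 - μ₁ + η)) ^ L`.
Conditionally on such an `S`, Chernoff's bound with tilts `± log (1 + δ)` bounds each relative
tail of `D` by `e^{-Ψ(δ) (n - 1) p S}`; for the lower tail this rests on
`2 log x ≤ x - x⁻¹` for `x ≥ 1`, i.e. `s ≤ sinh s` for `s ≥ 0`.
-/

open MeasureTheory ProbabilityTheory Filter Real
open scoped ENNReal NNReal

noncomputable section

open Finset

lemma sum_filter_le_add_of_imp_or {ι : Type*} {s : Finset ι} {f : ι → ℝ} (hf : ∀ i ∈ s, 0 ≤ f i)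
    (c c₁ c₂ : ι → Prop) [DecidablePred c] [DecidablePred c₁] [DecidablePred c₂]
    (h : ∀ i ∈ s, c i → c₁ i ∨ c₂ i) :
    ∑ i ∈ s with c i, f i ≤ ∑ i ∈ s with c₁ i, f i + ∑ i ∈ s with c₂ i, f i := by
  simp only [sum_filter, ← sum_add_distrib]
  gcongr with i hi
  have := hf i hi
  have := h i hi
  split_ifs <;> first | linarith | tauto

lemma sum_mul_le_sum_filter_add {ι : Type*} {s : Finset ι} {q f : ι → ℝ} (bad : ι → Prop)
    [DecidablePred bad] {ε : ℝ} (hq : ∀ i ∈ s, 0 ≤ q i) (hq1 : ∑ i ∈ s, q i = 1)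
    (hf : ∀ i ∈ s, f i ≤ 1) (hε : 0 ≤ ε) (hgood : ∀ i ∈ s, ¬ bad i → f i ≤ ε) :
    ∑ i ∈ s, q i * f i ≤ ∑ i ∈ s with bad i, q i + ε := by
  rw [← sum_filter_add_sum_filter_not s bad (fun i => q i * f i)]
  refine add_le_add (sum_le_sum fun i hi => ?_) ?_
  · exact mul_le_of_le_one_right (hq i (mem_filter.1 hi).1) (hf i (mem_filter.1 hi).1)
  calc ∑ i ∈ s with ¬ bad i, q i * f i ≤ ∑ i ∈ s with ¬ bad i, q i * ε := by
        refine sum_le_sum fun i hi => ?_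
        rw [mem_filter] at hi
        exact mul_le_mul_of_nonneg_left (hgood i hi.1 hi.2) (hq i hi.1)
    _ ≤ ∑ i ∈ s, q i * ε := sum_le_sum_of_subset_of_nonneg (filter_subset _ _)
        fun i hi _ => mul_nonneg (hq i hi) hε
    _ = ε := by rw [← sum_mul, hq1, one_mul]

lemma sum_filter_product_mul {ι κ : Type*} (s : Finset ι) (t : Finset κ) (E : ι × κ → Prop)
    [DecidablePred E] (f : ι → ℝ) (g : ι → κ → ℝ) :
    ∑ x ∈ s ×ˢ t with E x, f x.1 * g x.1 x.2 = ∑ i ∈ s, f i * ∑ j ∈ t with E (i, j), g i j := by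
  simp only [sum_filter, sum_product, mul_sum, mul_ite, mul_zero]

lemma two_mul_log_le_sub_inv {x : ℝ} (hx : 1 ≤ x) : 2 * log x ≤ x - x⁻¹ := by
  have := self_le_sinh_iff.2 (log_nonneg hx)
  rw [sinh_log (by linarith)] at this
  linarith

lemma Psi_nonneg {x : ℝ} (hx : 0 ≤ x) : 0 ≤ Psi x := by
  have hx1 : 0 < x + 1 := by linarith
  have := mul_le_mul_of_nonneg_left (one_sub_inv_le_log_of_pos hx1) hx1.le
  rw [mul_sub, mul_one, mul_inv_cancel₀ hx1.ne'] at this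
  unfold Psi
  linarith

lemma pow_mul_pow_le_one {a b : ℝ} (ha0 : 0 ≤ a) (ha1 : a ≤ 1) (hb0 : 0 ≤ b) (hb1 : b ≤ 1)
    (i j : ℕ) : a ^ i * b ^ j ≤ 1 :=
  mul_le_one₀ (pow_le_one₀ ha0 ha1) (pow_nonneg hb0 j) (pow_le_one₀ hb0 hb1)

lemma rpow_mul_rpow_pow_le_pow_mul_pow {a b x y : ℝ} (ha0 : 0 < a) (ha1 : a ≤ 1) (hb0 : 0 < b)
    (hb1 : b ≤ 1) {L i j : ℕ} (hi : (i : ℝ) ≤ x * L) (hj : (j : ℝ) ≤ y * L) :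
    (a ^ x * b ^ y) ^ L ≤ a ^ i * b ^ j := by
  rw [mul_pow, ← rpow_natCast (a ^ x), ← rpow_natCast (b ^ y), ← rpow_mul ha0.le,
    ← rpow_mul hb0.le, ← rpow_natCast a, ← rpow_natCast b]
  exact mul_le_mul (rpow_le_rpow_of_exponent_ge ha0 ha1 hi) (rpow_le_rpow_of_exponent_ge hb0 hb1 hj)
    (by positivity) (by positivity)

/-- Hoeffding's lemma for a Bernoulli variable. -/
lemma one_sub_add_mul_exp_le {p : ℝ} (hp0 : 0 ≤ p) (hp1 : p ≤ 1) (t : ℝ) :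
    1 - p + p * exp t ≤ exp (p * t + t ^ 2 / 8) := by
  let q : unitInterval := ⟨p, hp0, hp1⟩
  have hbdd : ∀ᵐ x ∂Ber((1 : ℝ), 0, q), x ∈ Set.Icc (0 : ℝ) 1 := by
    rw [ae_iff]
    exact bernoulliMeasure_apply_of_notMem_of_notMem q (by measurability) (by simp) (by simp)
  have hoeffding : p * exp (t * (1 - p)) + (1 - p) * exp (-(t * p)) ≤ exp (t ^ 2 / 8) := by
    convert (hasSubgaussianMGF_of_mem_Icc aemeasurable_id hbdd).mgf_le t using 1
    · simp [mgf, integral_bernoulliMeasure, q]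
    · norm_num
      ring_nf
  have e1 : exp (p * t) * exp (t * (1 - p)) = exp t := by rw [← exp_add]; ring_nf
  have e2 : exp (p * t) * exp (-(t * p)) = 1 := by rw [← exp_add, ← exp_zero]; ring_nf
  calc 1 - p + p * exp t = exp (p * t) * (p * exp (t * (1 - p)) + (1 - p) * exp (-(t * p))) := by
        linear_combination (-p) * e1 - (1 - p) * e2
    _ ≤ exp (p * t) * exp (t ^ 2 / 8) := by gcongr
    _ = exp (p * t + t ^ 2 / 8) := by rw [← exp_add]

def binomWeight (m : ℕ) (p : ℝ) (k : ℕ) : ℝ := m.choose k * p ^ k * (1 - p) ^ (m - k)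

section Binomial

variable {m : ℕ} {p : ℝ}

lemma binomWeight_nonneg (hp0 : 0 ≤ p) (hp1 : p ≤ 1) (k : ℕ) : 0 ≤ binomWeight m p k := by
  unfold binomWeight
  have : 0 ≤ 1 - p := by linarith
  positivity

lemma sum_binomWeight_mul_exp (m : ℕ) (p t : ℝ) :
    ∑ k ∈ range (m + 1), binomWeight m p k * exp (t * k) = (1 - p + p * exp t) ^ m := by
  rw [add_comm (1 - p), add_pow]
  refine sum_congr rfl fun k _ => ?_
  rw [binomWeight, mul_comm t, exp_nat_mul, mul_pow]
  ring

lemma sum_binomWeight (m : ℕ) (p : ℝ) : ∑ k ∈ range (m + 1), binomWeight m p k = 1 := by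
  simpa using sum_binomWeight_mul_exp m p 0

/-- Chernoff's bound: on `{k | c k}` the weight is dominated by `exp (t * (k - a))`. -/
lemma sum_filter_binomWeight_le_of_mgf (hp0 : 0 ≤ p) (hp1 : p ≤ 1) (c : ℕ → Prop)
    [DecidablePred c] {a t : ℝ} (hc : ∀ k, c k → t * a ≤ t * k) :
    ∑ k ∈ range (m + 1) with c k, binomWeight m p k ≤ exp (-(t * a)) * (1 - p + p * exp t) ^ m :=
  calc ∑ k ∈ range (m + 1) with c k, binomWeight m p k
      ≤ ∑ k ∈ range (m + 1) with c k, exp (-(t * a)) * (binomWeight m p k * exp (t * k)) := by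
        gcongr with k hk
        rw [mul_left_comm, ← exp_add]
        refine le_mul_of_one_le_right (binomWeight_nonneg hp0 hp1 k) (one_le_exp ?_)
        linarith [hc k (mem_filter.1 hk).2]
    _ ≤ ∑ k ∈ range (m + 1), exp (-(t * a)) * (binomWeight m p k * exp (t * k)) :=
        sum_le_sum_of_subset_of_nonneg (filter_subset _ _) fun k _ _ =>
          mul_nonneg (exp_pos _).le (mul_nonneg (binomWeight_nonneg hp0 hp1 k) (exp_pos _).le)
    _ = exp (-(t * a)) * (1 - p + p * exp t) ^ m := by
        rw [← mul_sum, sum_binomWeight_mul_exp]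

lemma sum_filter_binomWeight_le_poisson (hp0 : 0 ≤ p) (hp1 : p ≤ 1) (c : ℕ → Prop)
    [DecidablePred c] {a t : ℝ} (hc : ∀ k, c k → t * a ≤ t * k) :
    ∑ k ∈ range (m + 1) with c k, binomWeight m p k ≤ exp (m * p * (exp t - 1) - t * a) :=
  calc ∑ k ∈ range (m + 1) with c k, binomWeight m p k
      ≤ exp (-(t * a)) * (1 - p + p * exp t) ^ m := sum_filter_binomWeight_le_of_mgf hp0 hp1 c hc
    _ ≤ exp (-(t * a)) * exp (p * (exp t - 1)) ^ m := by
        have : 0 ≤ 1 - p + p * exp t := by nlinarith [exp_pos t]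
        gcongr
        linarith [add_one_le_exp (p * (exp t - 1))]
    _ = exp (m * p * (exp t - 1) - t * a) := by rw [← exp_nat_mul, ← exp_add]; ring_nf

lemma sum_filter_binomWeight_le_hoeffding (hp0 : 0 ≤ p) (hp1 : p ≤ 1) (c : ℕ → Prop)
    [DecidablePred c] {a t : ℝ} (hc : ∀ k, c k → t * a ≤ t * k) :
    ∑ k ∈ range (m + 1) with c k, binomWeight m p k ≤ exp (m * (p * t + t ^ 2 / 8) - t * a) :=
  calc ∑ k ∈ range (m + 1) with c k, binomWeight m p k
      ≤ exp (-(t * a)) * (1 - p + p * exp t) ^ m := sum_filter_binomWeight_le_of_mgf hp0 hp1 c hc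
    _ ≤ exp (-(t * a)) * exp (p * t + t ^ 2 / 8) ^ m := by
        have : 0 ≤ 1 - p + p * exp t := by nlinarith [exp_pos t]
        gcongr
        exact one_sub_add_mul_exp_le hp0 hp1 t
    _ = exp (m * (p * t + t ^ 2 / 8) - t * a) := by rw [← exp_nat_mul, ← exp_add]; ring_nf

lemma sum_binomWeight_abs_sub_gt_le (hp0 : 0 ≤ p) (hp1 : p ≤ 1) {η : ℝ} (hη : 0 < η) :
    ∑ k ∈ range (m + 1) with η * m < |((k : ℕ) : ℝ) - p * m|, binomWeight m p k ≤
      2 * exp (-2 * m * η ^ 2) := by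
  have upper := sum_filter_binomWeight_le_hoeffding (m := m) hp0 hp1
    (fun k : ℕ => η * m < k - p * m) (a := (p + η) * m) (t := 4 * η) fun k hk => by nlinarith
  have lower := sum_filter_binomWeight_le_hoeffding (m := m) hp0 hp1
    (fun k : ℕ => k - p * m < -(η * m)) (a := (p - η) * m) (t := -(4 * η)) fun k hk => by nlinarith
  calc _ ≤ _ := sum_filter_le_add_of_imp_or (fun k _ => binomWeight_nonneg hp0 hp1 k) _ _ _
        fun k _ hk => lt_abs.1 hk |>.imp id fun h => by linarith
    _ ≤ _ := add_le_add upper lower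
    _ = 2 * exp (-2 * m * η ^ 2) := by ring_nf

lemma sum_binomWeight_abs_div_sub_one_gt_le (hm : 0 < m) (hp0 : 0 < p) (hp1 : p ≤ 1) {δ : ℝ}
    (hδ : 0 < δ) :
    ∑ k ∈ range (m + 1) with δ < |((k : ℕ) : ℝ) / (m * p) - 1|, binomWeight m p k ≤
      2 * exp (-Psi δ * (m * p)) := by
  have hmp : 0 < (m : ℝ) * p := by positivity
  have hu : 0 ≤ log (δ + 1) := log_nonneg (by linarith)
  have hexp : exp (log (δ + 1)) = δ + 1 := exp_log (by linarith)
  have upper := sum_filter_binomWeight_le_poisson (m := m) hp0.le hp1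
    (fun k : ℕ => (1 + δ) * (m * p) < k) (a := (1 + δ) * (m * p)) (t := log (δ + 1))
    fun k hk => mul_le_mul_of_nonneg_left hk.le hu
  have lower := sum_filter_binomWeight_le_poisson (m := m) hp0.le hp1
    (fun k : ℕ => k < (1 - δ) * (m * p)) (a := (1 - δ) * (m * p)) (t := -log (δ + 1))
    fun k hk => by nlinarith
  rw [hexp] at upper
  rw [exp_neg, hexp] at lower
  have hlog := two_mul_log_le_sub_inv (x := δ + 1) (by linarith)
  have hsplit : ∀ k ∈ range (m + 1), δ < |(k : ℝ) / (m * p) - 1| →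
      (1 + δ) * (m * p) < k ∨ (k : ℝ) < (1 - δ) * (m * p) := fun k _ hk =>
    (lt_abs.1 hk).imp (fun h => (lt_div_iff₀ hmp).1 (by linarith))
      fun h => (div_lt_iff₀ hmp).1 (by linarith)
  calc _ ≤ _ :=
        sum_filter_le_add_of_imp_or (fun k _ => binomWeight_nonneg hp0.le hp1 k) _ _ _ hsplit
    _ ≤ exp (-Psi δ * (m * p)) + exp (-Psi δ * (m * p)) := by
        refine add_le_add (upper.trans_eq ?_) (lower.trans ?_)
        · unfold Psi; ring_nf
        · rw [exp_le_exp]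
          unfold Psi
          nlinarith [mul_le_mul_of_nonneg_left hlog hmp.le]
    _ = 2 * exp (-Psi δ * (m * p)) := by ring

end Binomial

def compoundBinomialWeight (μ₁ Γ₁ Γ₀ : ℝ) (L m : ℕ) (x : ℕ × ℕ) : ℝ :=
  binomWeight L μ₁ x.1 * binomWeight m (Γ₁ ^ x.1 * Γ₀ ^ (L - x.1)) x.2

section CompoundBinomial

variable {μ₁ Γ₁ Γ₀ : ℝ} {L m : ℕ}

lemma compoundBinomialWeight_nonneg (hμ₁ : μ₁ ∈ Set.Icc (0 : ℝ) 1) (hΓ₁ : Γ₁ ∈ Set.Icc (0 : ℝ) 1)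
    (hΓ₀ : Γ₀ ∈ Set.Icc (0 : ℝ) 1) (x : ℕ × ℕ) : 0 ≤ compoundBinomialWeight μ₁ Γ₁ Γ₀ L m x :=
  mul_nonneg (binomWeight_nonneg hμ₁.1 hμ₁.2 _) <| binomWeight_nonneg
    (mul_nonneg (pow_nonneg hΓ₁.1 _) (pow_nonneg hΓ₀.1 _))
    (pow_mul_pow_le_one hΓ₁.1 hΓ₁.2 hΓ₀.1 hΓ₀.2 _ _) _

lemma sum_compoundBinomialWeight (μ₁ Γ₁ Γ₀ : ℝ) (L m : ℕ) :
    ∑ x ∈ range (L + 1) ×ˢ range (m + 1), compoundBinomialWeight μ₁ Γ₁ Γ₀ L m x = 1 := by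
  simp only [compoundBinomialWeight, sum_product, ← mul_sum, sum_binomWeight, mul_one]

lemma IsCompoundBinomialPair.measure_eq_compoundBinomialWeight {Ω : Type*} [MeasurableSpace Ω]
    {P : Measure Ω} {n : ℕ} {D S : Ω → ℕ} (h : IsCompoundBinomialPair P μ₁ (1 - μ₁) Γ₁ Γ₀ n L D S) :
    ∀ x ∈ range (L + 1) ×ˢ range (n - 1 + 1), P ((fun ω => (S ω, D ω)) ⁻¹' {x}) =
      ENNReal.ofReal (compoundBinomialWeight μ₁ Γ₁ Γ₀ L (n - 1) x) := by
  rintro ⟨ℓ, d⟩ hx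
  rw [mem_product, mem_range, mem_range] at hx
  convert h.2.2 d (by omega) ℓ (by omega) using 2
  · ext ω
    simp [and_comm]
  · simp only [compoundBinomialWeight, binomWeight]
    ring

lemma sum_filter_compoundBinomialWeight_le (hμ₁ : μ₁ ∈ Set.Icc (0 : ℝ) 1)
    (hΓ₁ : Γ₁ ∈ Set.Ioc (0 : ℝ) 1) (hΓ₀ : Γ₀ ∈ Set.Ioc (0 : ℝ) 1) (hm : 0 < m) {η δ : ℝ}
    (hη : 0 < η) (hδ : 0 < δ) :
    ∑ x ∈ range (L + 1) ×ˢ range (m + 1)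
        with δ < |(x.2 : ℝ) / (m * Γ₁ ^ x.1 * Γ₀ ^ (L - x.1)) - 1|,
        compoundBinomialWeight μ₁ Γ₁ Γ₀ L m x ≤
      2 * exp (-2 * L * η ^ 2) +
        2 * exp (-Psi δ * m * (Γ₁ ^ (μ₁ + η) * Γ₀ ^ (1 - μ₁ + η)) ^ L) := by
  simp only [compoundBinomialWeight]
  rw [sum_filter_product_mul _ _ _ (binomWeight L μ₁) fun ℓ =>
    binomWeight m (Γ₁ ^ ℓ * Γ₀ ^ (L - ℓ))]
  simp_rw [mul_assoc (m : ℝ), mul_assoc (-Psi δ)]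
  have hp0 (ℓ : ℕ) : 0 < Γ₁ ^ ℓ * Γ₀ ^ (L - ℓ) := mul_pos (pow_pos hΓ₁.1 ℓ) (pow_pos hΓ₀.1 _)
  have hp1 (ℓ : ℕ) : Γ₁ ^ ℓ * Γ₀ ^ (L - ℓ) ≤ 1 :=
    pow_mul_pow_le_one hΓ₁.1.le hΓ₁.2 hΓ₀.1.le hΓ₀.2 ℓ (L - ℓ)
  refine (sum_mul_le_sum_filter_add (fun ℓ : ℕ => η * L < |(ℓ : ℝ) - μ₁ * L|)
    (ε := 2 * exp (-Psi δ * (m * (Γ₁ ^ (μ₁ + η) * Γ₀ ^ (1 - μ₁ + η)) ^ L)))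
    (fun ℓ _ => binomWeight_nonneg hμ₁.1 hμ₁.2 ℓ) (sum_binomWeight L μ₁) (fun ℓ _ => ?_)
    (by positivity) fun ℓ hℓ htyp => ?_).trans
    (add_le_add (sum_binomWeight_abs_sub_gt_le hμ₁.1 hμ₁.2 hη) le_rfl)
  · exact (sum_le_sum_of_subset_of_nonneg (filter_subset _ _) fun d _ _ =>
      binomWeight_nonneg (hp0 ℓ).le (hp1 ℓ) d).trans_eq (sum_binomWeight m _)
  · have hℓL : ℓ ≤ L := Nat.lt_succ_iff.1 (mem_range.1 hℓ)
    rw [not_lt, abs_le] at htyp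
    have hmin : (Γ₁ ^ (μ₁ + η) * Γ₀ ^ (1 - μ₁ + η)) ^ L ≤ Γ₁ ^ ℓ * Γ₀ ^ (L - ℓ) :=
      rpow_mul_rpow_pow_le_pow_mul_pow hΓ₁.1 hΓ₁.2 hΓ₀.1 hΓ₀.2 (by linarith)
        (by rw [Nat.cast_sub hℓL]; linarith)
    refine (sum_binomWeight_abs_div_sub_one_gt_le hm (hp0 ℓ) (hp1 ℓ) hδ).trans ?_
    simp only [neg_mul]
    have := Psi_nonneg hδ.le
    gcongr

end CompoundBinomial

lemma measure_preimage_le_sum_of_pmf {Ω α : Type*} [MeasurableSpace Ω] [MeasurableSpace α]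
    [MeasurableSingletonClass α] {P : Measure Ω} [IsProbabilityMeasure P] {X : Ω → α}
    (hX : Measurable X) (A : Finset α) {q : α → ℝ} (hq : ∀ x ∈ A, 0 ≤ q x)
    (hPX : ∀ x ∈ A, P (X ⁻¹' {x}) = ENNReal.ofReal (q x)) (hq1 : ∑ x ∈ A, q x = 1)
    (E : α → Prop) [DecidablePred E] :
    P {ω | E (X ω)} ≤ ENNReal.ofReal (∑ x ∈ A with E x, q x) := by
  have : IsProbabilityMeasure (P.map X) := Measure.isProbabilityMeasure_map hX.aemeasurable
  have hmap : ∀ B ⊆ A, P.map X B = ENNReal.ofReal (∑ x ∈ B, q x) := fun B hB => by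
    rw [← sum_measure_singleton, ENNReal.ofReal_sum_of_nonneg fun x hx => hq x (hB hx)]
    exact sum_congr rfl fun x hx => by
      rw [Measure.map_apply hX (measurableSet_singleton x), hPX x (hB hx)]
  have hcompl : P.map X (A : Set α)ᶜ = 0 := by
    rw [prob_compl_eq_zero_iff A.measurableSet, hmap A subset_rfl, hq1, ENNReal.ofReal_one]
  calc P {ω | E (X ω)} ≤ P.map X {x | E x} := Measure.le_map_apply hX.aemeasurable _
    _ ≤ P.map X (↑(A.filter E) ∪ (A : Set α)ᶜ) := measure_mono fun x hx => by
        by_cases hxA : x ∈ A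
        · exact Or.inl (mem_filter.2 ⟨hxA, hx⟩)
        · exact Or.inr hxA
    _ ≤ P.map X ↑(A.filter E) + P.map X (A : Set α)ᶜ := measure_union_le _ _
    _ = ENNReal.ofReal (∑ x ∈ A with E x, q x) := by
        rw [hcompl, add_zero, hmap _ (filter_subset _ _)]

theorem stmt15_general {Ω : Type*} [MeasurableSpace Ω] (P : Measure Ω) [IsProbabilityMeasure P]
    (μ0 μ1 Γ0 Γ1 : ℝ) (hμ1 : μ1 ∈ Set.Ioo (0:ℝ) 1)
    (hμ : μ0 + μ1 = 1) (hΓ0 : Γ0 ∈ Set.Ioo (0:ℝ) 1) (hΓ1 : Γ1 ∈ Set.Ioo (0:ℝ) 1)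
    (n L : ℕ) (hn : 2 ≤ n) (D S : Ω → ℕ)
    (hDS : IsCompoundBinomialPair P μ1 μ0 Γ1 Γ0 n L D S) :
    ∀ η ∈ Set.Ioo (0:ℝ) μ1, ∀ δ : ℝ, 0 < δ →
      P {ω | |(D ω : ℝ) / (((n : ℝ) - 1) * Γ1 ^ (S ω) * Γ0 ^ (L - S ω)) - 1| > δ} ≤
        ENNReal.ofReal (4 * Real.exp (-2 * L * η ^ 2) +
          2 * Real.exp (-Psi δ * ((n : ℝ) - 1) *
            (Γ1 ^ (μ1 + η) * Γ0 ^ (1 - μ1 + η)) ^ L)) := by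
  obtain rfl : μ0 = 1 - μ1 := by linarith
  rintro η ⟨hη, -⟩ δ hδ
  rw [← Nat.cast_pred (by omega)]
  have hΓ1' := Set.Ioo_subset_Ioc_self hΓ1
  have hΓ0' := Set.Ioo_subset_Ioc_self hΓ0
  refine (measure_preimage_le_sum_of_pmf (hDS.2.1.prodMk hDS.1) _
    (fun x _ => compoundBinomialWeight_nonneg (Set.Ioo_subset_Icc_self hμ1)
      (Set.Ioc_subset_Icc_self hΓ1') (Set.Ioc_subset_Icc_self hΓ0') x)
    hDS.measure_eq_compoundBinomialWeight (sum_compoundBinomialWeight _ _ _ _ _)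
    fun x => δ < |(x.2 : ℝ) / ((n - 1 : ℕ) * Γ1 ^ x.1 * Γ0 ^ (L - x.1)) - 1|).trans
    (ENNReal.ofReal_le_ofReal ?_)
  refine (sum_filter_compoundBinomialWeight_le (Set.Ioo_subset_Icc_self hμ1) hΓ1' hΓ0'
    (by omega) hη hδ).trans ?_
  linarith [exp_pos (-2 * L * η ^ 2)]

/-- explicit bound for the deviation of the ratio of the degree to
its conditional mean. -/
theorem stmt15 {Ω : Type*} [MeasurableSpace Ω] (P : Measure Ω) [IsProbabilityMeasure P]
    (μ0 μ1 Γ0 Γ1 : ℝ) (hμ0 : μ0 ∈ Set.Ioo (0:ℝ) 1) (hμ1 : μ1 ∈ Set.Ioo (0:ℝ) 1)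
    (hμ : μ0 + μ1 = 1) (hΓ0 : Γ0 ∈ Set.Ioo (0:ℝ) 1) (hΓ1 : Γ1 ∈ Set.Ioo (0:ℝ) 1)
    (n L : ℕ) (hn : 2 ≤ n) (hL : 1 ≤ L) (D S : Ω → ℕ)
    (hDS : IsCompoundBinomialPair P μ1 μ0 Γ1 Γ0 n L D S) :
    ∀ η ∈ Set.Ioo (0:ℝ) μ1, ∀ δ : ℝ, 0 < δ →
      P {ω | |(D ω : ℝ) / (((n : ℝ) - 1) * Γ1 ^ (S ω) * Γ0 ^ (L - S ω)) - 1| > δ} ≤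
        ENNReal.ofReal (4 * Real.exp (-2 * L * η ^ 2) +
          2 * Real.exp (-Psi δ * ((n : ℝ) - 1) *
            (Γ1 ^ (μ1 + η) * Γ0 ^ (1 - μ1 + η)) ^ L)) :=
  stmt15_general P μ0 μ1 Γ0 Γ1 hμ1 hμ hΓ0 hΓ1 n L hn D S hDS
end
end
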